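/- Let k be a continuous kernel on compact X with almost surely continuous zero-mean GP f ~ GP(0,k). The decoupled sample path (f|u)(·) = Σ_i w_i φ_i(·) + Σ_j v_j k(·, z_j) with v = K_{mm}^{-1}(u − Φw) has expectation (over w ~ N(0,I) and u ~ N(μ_u, Σ_u) independent) equal to k(·,Z)K_{mm}^{-1}μ_u, the sparse GP posterior mean. -/

import Mathlib

/-!
For fixed `x` the decoupled path is `a ⬝ᵥ w + c ⬝ᵥ u` with `c = k(x,Z) K⁻¹` and
`a = φ(x) - c Φ`, so by linearity of expectation its mean is `a ⬝ᵥ 0 + c ⬝ᵥ μᵤ`.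
-/

open MeasureTheory ProbabilityTheory Matrix

def IsGaussianVec {Ω : Type*} [MeasureSpace Ω] {p : ℕ}
    (X : Ω → Fin p → ℝ) (μ : Fin p → ℝ) (S : Matrix (Fin p) (Fin p) ℝ) : Prop :=
  ∀ a : Fin p → ℝ,
    Measure.map (fun ω => a ⬝ᵥ X ω) (ℙ : Measure Ω)
      = gaussianReal (a ⬝ᵥ μ) (a ⬝ᵥ S.mulVec a).toNNReal

namespace IsGaussianVec

variable {Ω : Type*} [MeasureSpace Ω] {p : ℕ}
  {X : Ω → Fin p → ℝ} {μ : Fin p → ℝ} {S : Matrix (Fin p) (Fin p) ℝ}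

theorem hasLaw_dotProduct (h : IsGaussianVec X μ S) (a : Fin p → ℝ) :
    HasLaw (fun ω => a ⬝ᵥ X ω) (gaussianReal (a ⬝ᵥ μ) (a ⬝ᵥ S *ᵥ a).toNNReal) ℙ where
  aemeasurable := AEMeasurable.of_map_ne_zero (by rw [h a]; exact NeZero.ne _)
  map_eq := h a

theorem integrable_dotProduct (h : IsGaussianVec X μ S) (a : Fin p → ℝ) :
    Integrable (fun ω => a ⬝ᵥ X ω) ℙ :=
  (h.hasLaw_dotProduct a).hasGaussianLaw.integrable

theorem integral_dotProduct (h : IsGaussianVec X μ S) (a : Fin p → ℝ) :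
    ∫ ω, a ⬝ᵥ X ω = a ⬝ᵥ μ := by
  rw [(h.hasLaw_dotProduct a).integral_eq, integral_id_gaussianReal]

end IsGaussianVec

theorem dotProduct_mulVec_sub_mulVec {m n p : Type*} [Fintype m] [Fintype n] [Fintype p]
    {R : Type*} [CommRing R] (b : m → R) (A : Matrix m n R) (B : Matrix n p R)
    (u : n → R) (w : p → R) :
    A *ᵥ (u - B *ᵥ w) ⬝ᵥ b = (b ᵥ* A) ⬝ᵥ u - (b ᵥ* A ᵥ* B) ⬝ᵥ w := by
  rw [dotProduct_comm, dotProduct_mulVec, dotProduct_sub, dotProduct_mulVec]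

theorem decoupled_sample_path_mean_general {Ω : Type*} [MeasureSpace Ω]
    {X : Type*} {m ℓ : ℕ}
    (φ : Fin ℓ → X → ℝ) (k : X → X → ℝ) (z : Fin m → X)
    (Φ : Matrix (Fin m) (Fin ℓ) ℝ)
    (K : Matrix (Fin m) (Fin m) ℝ)
    (w : Ω → Fin ℓ → ℝ) (u : Ω → Fin m → ℝ)
    (μu : Fin m → ℝ) (Su : Matrix (Fin m) (Fin m) ℝ)
    (hw : IsGaussianVec w 0 (1 : Matrix (Fin ℓ) (Fin ℓ) ℝ))
    (hu : IsGaussianVec u μu Su)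
    (path : Ω → X → ℝ)
    (hpath : path = fun ω x =>
      (∑ i, w ω i * φ i x)
        + ∑ j, (K⁻¹.mulVec (u ω - Φ.mulVec (w ω))) j * k x (z j)) :
    ∀ x : X,
      ∫ ω, path ω x ∂(ℙ : Measure Ω)
        = (fun j => k x (z j)) ⬝ᵥ K⁻¹.mulVec μu := by
  intro x
  set kx : Fin m → ℝ := fun j => k x (z j)
  set c := kx ᵥ* K⁻¹
  have path_eq : (fun ω => path ω x) =
      fun ω => ((fun i => φ i x) - c ᵥ* Φ) ⬝ᵥ w ω + c ⬝ᵥ u ω := by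
    funext ω
    rw [hpath]
    change w ω ⬝ᵥ (fun i => φ i x) + K⁻¹ *ᵥ (u ω - Φ *ᵥ w ω) ⬝ᵥ kx = _
    rw [dotProduct_mulVec_sub_mulVec, sub_dotProduct, dotProduct_comm (w ω)]
    ring
  rw [path_eq, integral_add (hw.integrable_dotProduct _) (hu.integrable_dotProduct _),
    hw.integral_dotProduct, hu.integral_dotProduct, dotProduct_zero, zero_add,
    dotProduct_mulVec]

/-- **The expected decoupled sample path is the sparse posterior mean.** With
`(f|u)(·) = Σᵢ wᵢ φᵢ(·) + Σⱼ vⱼ k(·, zⱼ)`, `v = K⁻¹(u − Φw)`, `w ~ N(0, I)` and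
`u ~ N(μᵤ, Σᵤ)` independent, `E[(f|u)(x)] = k(x,Z) K⁻¹ μᵤ` for every `x`. -/
theorem decoupled_sample_path_mean {Ω : Type*} [MeasureSpace Ω]
    [IsProbabilityMeasure (ℙ : Measure Ω)] {X : Type*} {m ℓ : ℕ}
    (φ : Fin ℓ → X → ℝ) (k : X → X → ℝ) (z : Fin m → X)
    (Φ : Matrix (Fin m) (Fin ℓ) ℝ) (hΦ : Φ = Matrix.of fun j i => φ i (z j))
    (K : Matrix (Fin m) (Fin m) ℝ)
    (hKdef : K = Matrix.of fun i j => k (z i) (z j)) (hK : IsUnit K.det)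
    (w : Ω → Fin ℓ → ℝ) (u : Ω → Fin m → ℝ)
    (μu : Fin m → ℝ) (Su : Matrix (Fin m) (Fin m) ℝ)
    (hw : IsGaussianVec w 0 (1 : Matrix (Fin ℓ) (Fin ℓ) ℝ))
    (hu : IsGaussianVec u μu Su)
    (hindep : IndepFun w u (ℙ : Measure Ω))
    (path : Ω → X → ℝ)
    (hpath : path = fun ω x =>
      (∑ i, w ω i * φ i x)
        + ∑ j, (K⁻¹.mulVec (u ω - Φ.mulVec (w ω))) j * k x (z j)) :
    ∀ x : X,
      ∫ ω, path ω x ∂(ℙ : Measure Ω)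
        = (fun j => k x (z j)) ⬝ᵥ K⁻¹.mulVec μu :=
  decoupled_sample_path_mean_general φ k z Φ K w u μu Su hw hu path hpath
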